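/- Let M be a connected topological space with a Borel measure μ and let Ω : M × M → ℂ be continuous and satisfy propagator conditions (1)–(5). Let H_phy denote the range of the orthogonal projection P_Ω on L²(M, μ), viewed as a Hilbert space, and note that each coherent-state projection q_z maps H_phy into itself. If T is a bounded linear operator on H_phy commuting with the restriction of q_z to H_phy for every z ∈ M, then T is a scalar multiple of the identity. (Equivalently, the von Neumann algebra generated by {q_z|_{H_phy} : z ∈ M} is all of B(H_phy).) -/

import Mathlib

open MeasureTheory Submodule
open scoped InnerProductSpace ComplexConjugate

/-!
The reproducing property makes each `Ω x` a unit vector `e x` of `L²` with `⟪e z, e w⟫ = Ω w z`,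
identifies `q z` with the rank-one projection onto `e z`, and shows that `P` fixes every `e x`
and kills their orthogonal complement, so its range lies in their closed span. An operator commuting with `q z` has `e z` as an
eigenvector; comparing `T (q z (e w))` with `q z (T (e w))` shows that the eigenvalues at `z`
and `w` agree as soon as `Ω w z ≠ 0`, which by continuity holds near `z`. So the eigenvalue is
locally constant, hence constant on the connected space `M`, and `T` is this scalar on the
closed span of the coherent states.
-/

section HilbertSpace

variable {𝕜 H : Type*} [RCLike 𝕜] [NormedAddCommGroup H] [InnerProductSpace 𝕜 H]

open InnerProductSpace

theorem apply_eq_inner_smul_of_commute_rankOne {T : H →L[𝕜] H} {v : H} (hv : ⟪v, v⟫_𝕜 = 1)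
    (hT : T (rankOne 𝕜 v v v) = rankOne 𝕜 v v (T v)) : T v = ⟪v, T v⟫_𝕜 • v := by
  simpa only [rankOne_apply, hv, one_smul] using hT

theorem eigenvalue_eq_of_commute_rankOne {T : H →L[𝕜] H} {v w : H} {a b : 𝕜} (hv : v ≠ 0)
    (hvw : ⟪v, w⟫_𝕜 ≠ 0) (hTv : T v = a • v) (hTw : T w = b • w)
    (hT : T (rankOne 𝕜 v v w) = rankOne 𝕜 v v (T w)) : a = b := by
  rw [rankOne_apply, rankOne_apply, map_smul, hTv, hTw, inner_smul_right, smul_smul,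
    mul_comm b] at hT
  exact mul_left_cancel₀ hvw (smul_left_injective 𝕜 hv hT)

theorem exists_forall_mem_closure_span_eq_smul_of_commute_rankOne {M : Type*}
    [TopologicalSpace M] [ConnectedSpace M] {e : M → H} {T : H →L[𝕜] H}
    (he : ∀ z, ⟪e z, e z⟫_𝕜 = 1) (hcont : ∀ z, ContinuousAt (fun w => ⟪e z, e w⟫_𝕜) z)
    (hT : ∀ z w, T (rankOne 𝕜 (e z) (e z) (e w)) = rankOne 𝕜 (e z) (e z) (T (e w))) :
    ∃ c : 𝕜, ∀ ψ ∈ (span 𝕜 (Set.range e)).topologicalClosure, T ψ = c • ψ := by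
  set eigenvalue : M → 𝕜 := fun z => ⟪e z, T (e z)⟫_𝕜
  have hTe (z : M) : T (e z) = eigenvalue z • e z :=
    apply_eq_inner_smul_of_commute_rankOne (he z) (hT z z)
  have hne (z : M) : e z ≠ 0 := fun h => by simpa [h] using he z
  have hlocal : IsLocallyConstant eigenvalue := by
    refine (IsLocallyConstant.iff_eventually_eq _).2 fun z => ?_
    filter_upwards [(hcont z).eventually_ne (by rw [he z]; exact one_ne_zero)] with w hw
    exact (eigenvalue_eq_of_commute_rankOne (hne z) hw (hTe z) (hTe w) (hT z w)).symm
  obtain ⟨z₀⟩ : Nonempty M := inferInstance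
  refine ⟨eigenvalue z₀, fun ψ hψ => ?_⟩
  have hrange : Set.EqOn T ⇑(eigenvalue z₀ • ContinuousLinearMap.id 𝕜 H) (Set.range e) := by
    rintro _ ⟨z, rfl⟩
    simp [hTe z, hlocal.apply_eq_of_preconnectedSpace z z₀]
  simpa using ContinuousLinearMap.eqOn_closure_span hrange hψ

theorem range_le_topologicalClosure_span [CompleteSpace H] {P : H →L[𝕜] H} {s : Set H}
    (hker : ∀ u ∈ (span 𝕜 s)ᗮ, P u = 0) (hfix : ∀ v ∈ s, P v = v) :
    LinearMap.range (P : H →ₗ[𝕜] H) ≤ (span 𝕜 s).topologicalClosure := by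
  rintro _ ⟨ψ, rfl⟩
  obtain ⟨v, hv, u, hu, rfl⟩ := (span 𝕜 s).topologicalClosure.exists_add_mem_mem_orthogonal ψ
  rw [orthogonal_closure] at hu
  have hPv : P v = v :=
    ContinuousLinearMap.eqOn_closure_span (g := ContinuousLinearMap.id 𝕜 H) hfix hv
  simpa [hker u hu, hPv] using hv

end HilbertSpace

section Propagator

variable {M : Type*} [MeasurableSpace M] {μ : Measure M} {Ω : M → M → ℂ}

theorem memLp_two_of_integrable_mul_conj {x : M} (hmeas : AEStronglyMeasurable (Ω x) μ)
    (hΩ : ∀ x y, Ω x y = conj (Ω y x)) (hint : Integrable (fun z => Ω x z * Ω z x) μ) :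
    MemLp (Ω x) 2 μ := by
  rw [memLp_two_iff_integrable_sq_norm hmeas]
  have hsq : (fun z => Ω x z * Ω z x) = fun z => ((‖Ω x z‖ ^ 2 : ℝ) : ℂ) := by
    funext z
    rw [hΩ z x]
    exact_mod_cast Complex.mul_conj' (Ω x z)
  rw [hsq] at hint
  exact hint.re.congr (.of_forall fun z => Complex.ofReal_re _)

theorem inner_eq_integral_mul_kernel {v : Lp ℂ 2 μ} {x : M} (hv : v =ᵐ[μ] Ω x)
    (hΩ : ∀ x y, Ω x y = conj (Ω y x)) (ψ : Lp ℂ 2 μ) :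
    ⟪v, ψ⟫_ℂ = ∫ y, ψ y * Ω y x ∂μ := by
  rw [L2.inner_def]
  refine integral_congr_ae ?_
  filter_upwards [hv] with y hy
  rw [RCLike.inner_apply, hy, hΩ y x]

theorem inner_eq_kernel {v w : Lp ℂ 2 μ} {x y : M} (hv : v =ᵐ[μ] Ω x) (hw : w =ᵐ[μ] Ω y)
    (hΩ : ∀ x y, Ω x y = conj (Ω y x)) (hrep : ∀ x y, ∫ z, Ω x z * Ω z y ∂μ = Ω x y) :
    ⟪v, w⟫_ℂ = Ω y x := by
  rw [inner_eq_integral_mul_kernel hv hΩ, ← hrep]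
  refine integral_congr_ae ?_
  filter_upwards [hw] with z hz
  rw [hz]

theorem eq_rankOne_of_ae_eq {v : Lp ℂ 2 μ} {z : M} (hv : v =ᵐ[μ] Ω z)
    (hΩ : ∀ x y, Ω x y = conj (Ω y x)) {q : Lp ℂ 2 μ →L[ℂ] Lp ℂ 2 μ}
    (hq : ∀ ψ : Lp ℂ 2 μ, ∀ᵐ y ∂μ, q ψ y = (∫ w, ψ w * Ω w z ∂μ) * Ω z y) :
    q = InnerProductSpace.rankOne ℂ v v := by
  ext1 ψ
  refine Lp.ext ?_
  filter_upwards [hq ψ, Lp.coeFn_smul ⟪v, ψ⟫_ℂ v, hv] with y hqy hsmul hvy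
  rw [InnerProductSpace.rankOne_apply, hsmul, Pi.smul_apply, hvy, hqy,
    inner_eq_integral_mul_kernel hv hΩ, smul_eq_mul]

variable {e : M → Lp ℂ 2 μ} {P : Lp ℂ 2 μ →L[ℂ] Lp ℂ 2 μ}

theorem ae_eq_inner_of_integral_kernel (he : ∀ x, e x =ᵐ[μ] Ω x)
    (hΩ : ∀ x y, Ω x y = conj (Ω y x))
    (hP : ∀ ψ : Lp ℂ 2 μ, ∀ᵐ x ∂μ, P ψ x = ∫ y, ψ y * Ω y x ∂μ) (ψ : Lp ℂ 2 μ) :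
    P ψ =ᵐ[μ] fun x => ⟪e x, ψ⟫_ℂ := by
  filter_upwards [hP ψ] with x hx
  rw [hx, inner_eq_integral_mul_kernel (he x) hΩ]

theorem apply_coherent_eq_self (he : ∀ x, e x =ᵐ[μ] Ω x)
    (hΩ : ∀ x y, Ω x y = conj (Ω y x)) (hrep : ∀ x y, ∫ z, Ω x z * Ω z y ∂μ = Ω x y)
    (hP : ∀ ψ : Lp ℂ 2 μ, ∀ᵐ x ∂μ, P ψ x = ∫ y, ψ y * Ω y x ∂μ) (z : M) :
    P (e z) = e z := by
  refine Lp.ext ?_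
  filter_upwards [ae_eq_inner_of_integral_kernel he hΩ hP (e z), he z] with x hx hz
  rw [hx, hz, inner_eq_kernel (he x) (he z) hΩ hrep]

theorem range_le_topologicalClosure_span_coherent (he : ∀ x, e x =ᵐ[μ] Ω x)
    (hΩ : ∀ x y, Ω x y = conj (Ω y x)) (hrep : ∀ x y, ∫ z, Ω x z * Ω z y ∂μ = Ω x y)
    (hP : ∀ ψ : Lp ℂ 2 μ, ∀ᵐ x ∂μ, P ψ x = ∫ y, ψ y * Ω y x ∂μ) :
    LinearMap.range (P : Lp ℂ 2 μ →ₗ[ℂ] Lp ℂ 2 μ) ≤ (span ℂ (Set.range e)).topologicalClosure := by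
  refine range_le_topologicalClosure_span (fun u hu => Lp.ext ?_) ?_
  · filter_upwards [ae_eq_inner_of_integral_kernel he hΩ hP u, Lp.coeFn_zero ℂ 2 μ] with x hx h0
    rw [hx, h0, inner_right_of_mem_orthogonal (subset_span (Set.mem_range_self x)) hu]
    rfl
  · rintro _ ⟨z, rfl⟩
    exact apply_coherent_eq_self he hΩ hrep hP z

end Propagator

theorem commutant_of_coherent_states_trivial
    {M : Type*} [TopologicalSpace M] [ConnectedSpace M]
    [MeasurableSpace M] [BorelSpace M]
    (μ : Measure M)
    (Ω : M → M → ℂ)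
    (hΩcont : Continuous fun p : M × M => Ω p.1 p.2)
    (h1 : ∀ x, Ω x x = 1)
    (h3 : ∀ x y, Ω x y = (starRingEnd ℂ) (Ω y x))
    (h4int : ∀ x y, Integrable (fun z => Ω x z * Ω z y) μ)
    (h4 : ∀ x y, ∫ z, Ω x z * Ω z y ∂μ = Ω x y)
    (P : Lp ℂ 2 μ →L[ℂ] Lp ℂ 2 μ)
    (hP : ∀ Ψ : Lp ℂ 2 μ, ∀ᵐ x ∂μ, (P Ψ) x = ∫ y, Ψ y * Ω y x ∂μ)
    (qz : M → (Lp ℂ 2 μ →L[ℂ] Lp ℂ 2 μ))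
    (hqz : ∀ z, ∀ Ψ : Lp ℂ 2 μ, ∀ᵐ y ∂μ,
      (qz z Ψ) y = (∫ w, Ψ w * Ω w z ∂μ) * Ω z y)
    (T : Lp ℂ 2 μ →L[ℂ] Lp ℂ 2 μ)
    (hT_comm : ∀ z : M, ∀ ψ ∈ LinearMap.range (P : Lp ℂ 2 μ →ₗ[ℂ] Lp ℂ 2 μ), T (qz z ψ) = qz z (T ψ)) :
    ∃ c : ℂ, ∀ ψ ∈ LinearMap.range (P : Lp ℂ 2 μ →ₗ[ℂ] Lp ℂ 2 μ), T ψ = c • ψ := by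
  have hmem (x : M) : MemLp (Ω x) 2 μ :=
    memLp_two_of_integrable_mul_conj (hΩcont.comp (.prodMk_right x)).aestronglyMeasurable
      h3 (h4int x x)
  set e : M → Lp ℂ 2 μ := fun x => (hmem x).toLp
  have he (x : M) : e x =ᵐ[μ] Ω x := (hmem x).coeFn_toLp
  have hinner (z w : M) : ⟪e z, e w⟫_ℂ = Ω w z := inner_eq_kernel (he z) (he w) h3 h4
  have hq (z : M) := eq_rankOne_of_ae_eq (he z) h3 (hqz z)
  have hcomm (z w : M) := hT_comm z (e w) ⟨e w, apply_coherent_eq_self he h3 h4 hP w⟩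
  simp only [hq] at hcomm
  obtain ⟨c, hc⟩ := exists_forall_mem_closure_span_eq_smul_of_commute_rankOne (e := e)
    (fun z => by rw [hinner, h1])
    (fun z => by simp only [hinner]; exact (hΩcont.comp (.prodMk_left z)).continuousAt) hcomm
  exact ⟨c, fun ψ hψ => hc ψ (range_le_topologicalClosure_span_coherent he h3 h4 hP hψ)⟩
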